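/- arXiv:1306.3777 — 2 statements merged into one kernel-verified Lean document; each statement's English description precedes it below -/
import Mathlib

section
/- If $\Phi : X \to Y$ is a dill map between one-sided subshifts and $Y$ contains no $\sigma$-periodic points, then the cocycle of $\Phi$ is unique: any two cocycles $s, s' : X \to \mathbb{N}$ for $\Phi$ are equal. -/
open Filter Topology

section Defs

variable {A : Type*} {B : Type*} {C : Type*}

/-- The one-sided shift map. -/
def shift (x : ℕ → A) : ℕ → A := fun n => x (n + 1)

/-- A (one-sided) subshift: a closed, shift-invariant set of configurations. -/
def Subshift [TopologicalSpace A] (X : Set (ℕ → A)) : Prop :=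
  IsClosed X ∧ ∀ x ∈ X, shift x ∈ X

/-- `X` is uniformly recurrent: every pattern occurring in `X` occurs in every
sufficiently long window of every point of `X`. -/
def UniformlyRecurrent (X : Set (ℕ → A)) : Prop :=
  ∀ x ∈ X, ∀ l : ℕ, ∃ N : ℕ, ∀ y ∈ X, ∃ i < N, ∀ k < l, y (i + k) = x k

/-- A block map: a continuous shift-commuting map. -/
def BlockMap [TopologicalSpace A] [TopologicalSpace B] (X : Set (ℕ → A)) (Y : Set (ℕ → B))
    (f : (ℕ → A) → (ℕ → B)) : Prop :=
  Set.MapsTo f X Y ∧ ContinuousOn f X ∧ ∀ x ∈ X, f (shift x) = shift (f x)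

/-- `s` is a cocycle for `Φ` on `X`: `Φ (σ x) = σ^(s x) (Φ x)`. -/
def IsCocycle (X : Set (ℕ → A)) (Φ : (ℕ → A) → (ℕ → B)) (s : (ℕ → A) → ℕ) : Prop :=
  ∀ x ∈ X, ∀ n : ℕ, Φ (shift x) n = Φ x (n + s x)

/-- A dill map: a continuous map with a continuous cocycle which is nontrivial
along every orbit. -/
def DillMap [TopologicalSpace A] [TopologicalSpace B] (X : Set (ℕ → A)) (Y : Set (ℕ → B))
    (Φ : (ℕ → A) → (ℕ → B)) : Prop :=
  Set.MapsTo Φ X Y ∧ ContinuousOn Φ X ∧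
    ∃ s : (ℕ → A) → ℕ, ContinuousOn s X ∧ IsCocycle X Φ s ∧
      ∀ x ∈ X, ∃ n : ℕ, 0 < s (shift^[n] x)

/-- Continuity (local constancy) of a word-valued function on `X`. -/
def WordContinuousOn (φ : (ℕ → A) → List B) (X : Set (ℕ → A)) : Prop :=
  ∀ x ∈ X, ∃ R : ℕ, ∀ y ∈ X, (∀ k ≤ R, y k = x k) → φ y = φ x

/-- `φ` is an implementation of `Φ` on `X`:
`Φ x = φ x ++ φ (σ x) ++ φ (σ² x) ++ ⋯`, expressed coordinatewise. -/
def IsImplementation (X : Set (ℕ → A)) (Φ : (ℕ → A) → (ℕ → B))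
    (φ : (ℕ → A) → List B) : Prop :=
  WordContinuousOn φ X ∧ ∀ x ∈ X, ∀ n : ℕ,
    Φ x n = if h : n < (φ x).length then (φ x).get ⟨n, h⟩
            else Φ (shift x) (n - (φ x).length)

/-- `ⁿφ(x) = φ(x) φ(σ x) ⋯ φ(σ^(n-1) x)`. -/
def iterWord (φ : (ℕ → A) → List B) (x : ℕ → A) : ℕ → List B
  | 0 => []
  | n + 1 => iterWord φ x n ++ φ (shift^[n] x)

/-- The invariant `Z`: `|ⁿφ(x)|/n → lam` for every `x ∈ X`. -/
def HasZ (X : Set (ℕ → A)) (φ : (ℕ → A) → List B) (lam : ℝ) : Prop :=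
  ∀ x ∈ X, Tendsto (fun n : ℕ => ((iterWord φ x n).length : ℝ) / n) atTop (𝓝 lam)

/-- `D` is a deviation bound: `| |ⁿφ(x)| - lam·n | ≤ D` for all `x ∈ X`, `n`. -/
def HasDBound (X : Set (ℕ → A)) (φ : (ℕ → A) → List B) (lam D : ℝ) : Prop :=
  ∀ x ∈ X, ∀ n : ℕ, |((iterWord φ x n).length : ℝ) - lam * n| ≤ D

/-- `R` is an in-radius bound for `φ` on `X`: `φ x` only depends on `x_[0,R]`. -/
def HasInRadius (X : Set (ℕ → A)) (φ : (ℕ → A) → List B) (R : ℕ) : Prop :=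
  ∀ x ∈ X, ∀ y ∈ X, (∀ k ≤ R, x k = y k) → φ x = φ y

/-- Almost equivalence: images of every point agree up to shifts. -/
def AlmostEquiv (X : Set (ℕ → A)) (Φ Ψ : (ℕ → A) → (ℕ → B)) : Prop :=
  ∀ x ∈ X, ∃ i j : ℕ, shift^[i] (Φ x) = shift^[j] (Ψ x)

/-- The implementation of the composition of two dill maps. -/
def compImpl (φ₁ : (ℕ → A) → List B) (Φ₁ : (ℕ → A) → (ℕ → B))
    (φ₂ : (ℕ → B) → List C) (x : ℕ → A) : List C :=
  iterWord φ₂ (Φ₁ x) (φ₁ x).length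

/-- Extension of a substitution to words. -/
def wordApply (τ : A → List A) (w : List A) : List A := (w.map τ).flatten

/-- Iterated image `τⁿ(a)` of a letter. -/
def subPow (τ : A → List A) : ℕ → A → List A
  | 0, a => [a]
  | n + 1, a => wordApply τ (subPow τ n a)

/-- The language of the substitution `τ`: infixes of the `τⁿ(a)`. -/
def InLanguage (τ : A → List A) (w : List A) : Prop :=
  ∃ a n, w <:+: subPow τ n a

/-- The one-sided subshift of the substitution `τ`. -/
def Xsub (τ : A → List A) : Set (ℕ → A) :=
  {x | ∀ i l : ℕ, InLanguage τ (List.ofFn fun k : Fin l => x (i + k))}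

/-- Primitivity of a substitution. -/
def Primitive (τ : A → List A) : Prop :=
  ∃ N, ∀ n ≥ N, ∀ a b : A, a ∈ subPow τ n b

/-- The word `w` occurs in `x` at position `i`. -/
def occursAt (w : List A) (x : ℕ → A) (i : ℕ) : Prop :=
  w = List.ofFn fun k : Fin w.length => x (i + k)

/-- The action of a (non-erasing) substitution on one-sided configurations. -/
def subApply [Inhabited A] (τ : A → List A) (x : ℕ → A) : ℕ → A :=
  fun n => (wordApply τ (List.ofFn fun k : Fin (n + 1) => x k)).getD n default

end Defs


lemma shift_iter_apply {A : Type*} (x : ℕ → A) (k n : ℕ) : shift^[k] x n = x (n + k) := by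
  induction k generalizing x n with
  | zero => rfl
  | succ m ih =>
    rw [Function.iterate_succ_apply, ih, shift]
    ring_nf

lemma shift_iter_mem {A : Type*} [TopologicalSpace A] {X : Set (ℕ → A)} (hX : Subshift X)
    {x : ℕ → A} (hx : x ∈ X) (k : ℕ) : shift^[k] x ∈ X := by
  induction k with
  | zero => exact hx
  | succ m ih => rw [Function.iterate_succ_apply']; exact hX.2 _ ih

/-- if `Y` has no `σ`-periodic points, the cocycle of a dill map
`Φ : X → Y` is unique. -/
theorem stmt5 {A B : Type*} [Fintype A] [Fintype B]
    [TopologicalSpace A] [DiscreteTopology A] [TopologicalSpace B] [DiscreteTopology B]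
    (X : Set (ℕ → A)) (Y : Set (ℕ → B)) (hX : Subshift X) (hY : Subshift Y)
    (haper : ∀ y ∈ Y, ∀ p : ℕ, 0 < p → shift^[p] y ≠ y)
    (Φ : (ℕ → A) → (ℕ → B)) (hΦ : DillMap X Y Φ)
    (s s' : (ℕ → A) → ℕ) (hs : IsCocycle X Φ s) (hs' : IsCocycle X Φ s') :
    ∀ x ∈ X, s x = s' x := by
  have key : ∀ x ∈ X, s x ≤ s' x := by
    intro x hx
    by_contra h
    push_neg at h
    set p := s x - s' x with hp
    have hp0 : 0 < p := Nat.sub_pos_of_lt h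
    have hy : Φ x ∈ Y := hΦ.1 hx
    have hz : shift^[s' x] (Φ x) ∈ Y := shift_iter_mem hY hy _
    apply haper _ hz p hp0
    funext n
    rw [shift_iter_apply, shift_iter_apply, shift_iter_apply]
    have h1 := hs x hx n
    have h2 := hs' x hx n
    have : n + p + s' x = n + s x := by omega
    rw [this, ← h1, h2]
  intro x hx
  exact le_antisymm (key x hx) (by
    have : ∀ x ∈ X, s' x ≤ s x := by
      intro x hx
      by_contra h
      push_neg at h
      set p := s' x - s x with hp
      have hp0 : 0 < p := Nat.sub_pos_of_lt h
      have hy : Φ x ∈ Y := hΦ.1 hx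
      have hz : shift^[s x] (Φ x) ∈ Y := shift_iter_mem hY hy _
      apply haper _ hz p hp0
      funext n
      rw [shift_iter_apply, shift_iter_apply, shift_iter_apply]
      have h1 := hs x hx n
      have h2 := hs' x hx n
      have : n + p + s x = n + s' x := by omega
      rw [this, ← h2, h1]
    exact this x hx)
end

section
/- Let $\Phi_1 : X \to Y$ and $\Phi_2 : Y \to Z$ be dill maps with implementations $\phi_1$ and $\phi_2$. Then $\Phi_2 \circ \Phi_1 : X \to Z$ is a dill map, and the function $\phi(x) = {}^{|\phi_1(x)|}\phi_2({}^{\infty}\phi_1(x))$ is an implementation of $\Phi_2 \circ \Phi_1$. -/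
open Filter Topology

/-!
Shifting `x` once shifts `Φ₁ x` by `s₁ x`, and each of those steps shifts `Φ₂ (Φ₁ x)` by the
value of `s₂` there; summing gives a cocycle of `Φ₂ ∘ Φ₁`, continuous because `s₁` is locally
constant. Along the orbit of `x` these blocks of steps tile all of `ℕ`, since `s₁` is nontrivial
on the orbit, so some block contains a position where `s₂` is positive. For the implementation,
unroll the implementation of `Φ₂` on `Φ₁ x` for `|φ₁ x|` steps: shifting `Φ₁ x` by `|φ₁ x|`
gives `Φ₁ (σ x)`. The composed word depends only on `φ₁ x` and a finite prefix of `Φ₁ x`,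
hence is locally constant.
-/

section Dill

variable {A B C : Type*}

lemma shift_iterate_apply (x : ℕ → A) (k n : ℕ) : shift^[k] x n = x (n + k) := by
  induction k generalizing n with
  | zero => rfl
  | succ k ih => rw [Function.iterate_succ_apply', shift, ih, Nat.add_right_comm, Nat.add_assoc]

lemma continuous_shift [TopologicalSpace A] : Continuous (shift : (ℕ → A) → ℕ → A) :=
  continuous_pi fun n => continuous_apply (n + 1)

lemma eventually_nhds_iff_exists_agree [TopologicalSpace A] [DiscreteTopology A]
    {x : ℕ → A} {p : (ℕ → A) → Prop} :
    (∀ᶠ y in 𝓝 x, p y) ↔ ∃ R : ℕ, ∀ y : ℕ → A, (∀ k ≤ R, y k = x k) → p y := by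
  constructor
  · intro h
    obtain ⟨_, ⟨z, R, rfl⟩, hxz, hsub⟩ :=
      (PiNat.isTopologicalBasis_cylinders fun _ => A).mem_nhds_iff.1 h
    rw [PiNat.mem_cylinder_iff_eq] at hxz
    refine ⟨R, fun y hy => hsub ?_⟩
    rw [← hxz, PiNat.mem_cylinder_iff]
    exact fun k hk => hy k hk.le
  · rintro ⟨R, hR⟩
    filter_upwards [(PiNat.isOpen_cylinder _ x (R + 1)).mem_nhds (PiNat.self_mem_cylinder x _)]
      with y hy
    exact hR y fun k hk => PiNat.mem_cylinder_iff.1 hy k (Nat.lt_succ_of_le hk)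

lemma wordContinuousOn_iff [TopologicalSpace A] [DiscreteTopology A]
    {φ : (ℕ → A) → List B} {X : Set (ℕ → A)} :
    WordContinuousOn φ X ↔ ∀ x ∈ X, ∀ᶠ y in 𝓝[X] x, φ y = φ x := by
  simp only [WordContinuousOn, eventually_nhdsWithin_iff, eventually_nhds_iff_exists_agree]
  grind

lemma ContinuousWithinAt.eventually_eq_of_discrete {α β : Type*} [TopologicalSpace α]
    [TopologicalSpace β] [DiscreteTopology β] {f : α → β} {s : Set α} {x : α}
    (h : ContinuousWithinAt f s x) : ∀ᶠ y in 𝓝[s] x, f y = f x := by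
  simpa only [nhds_discrete, tendsto_pure] using h.tendsto

section Cocycle

variable {X : Set (ℕ → A)} {Φ : (ℕ → A) → (ℕ → B)} {s : (ℕ → A) → ℕ}

lemma IsCocycle.apply_shift (hs : IsCocycle X Φ s) {x : ℕ → A} (hx : x ∈ X) :
    Φ (shift x) = shift^[s x] (Φ x) :=
  funext fun n => by rw [hs x hx n, shift_iterate_apply]

lemma IsCocycle.apply_shift_iterate (hX : Set.MapsTo shift X X) (hs : IsCocycle X Φ s)
    {x : ℕ → A} (hx : x ∈ X) (k : ℕ) :
    Φ (shift^[k] x) = shift^[∑ i ∈ Finset.range k, s (shift^[i] x)] (Φ x) := by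
  induction k with
  | zero => rfl
  | succ k ih =>
    rw [Function.iterate_succ_apply', hs.apply_shift (hX.iterate k hx), ih,
      ← Function.iterate_add_apply, Finset.sum_range_succ, add_comm]

end Cocycle

lemma exists_le_sum_range {f : ℕ → ℕ} (hf : ∀ k, ∃ j, 0 < f (j + k)) (m : ℕ) :
    ∃ n, m ≤ ∑ i ∈ Finset.range n, f i := by
  induction m with
  | zero => exact ⟨0, le_rfl⟩
  | succ m ih =>
    obtain ⟨n, hn⟩ := ih
    obtain ⟨j, hj⟩ := hf n
    have hmono : ∑ i ∈ Finset.range n, f i ≤ ∑ i ∈ Finset.range (j + n), f i :=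
      Finset.sum_le_sum_of_subset (Finset.range_subset_range.2 (Nat.le_add_left n j))
    refine ⟨j + n + 1, ?_⟩
    rw [Finset.sum_range_succ]
    omega

/-- The blocks `[T n, T n + f n)`, where `T n = ∑_{j<n} f j`, tile `[0, T n)`. -/
lemma eq_zero_of_lt_sum_range {f g : ℕ → ℕ}
    (h : ∀ n, ∀ i < f n, g (i + ∑ j ∈ Finset.range n, f j) = 0) :
    ∀ n, ∀ m < ∑ j ∈ Finset.range n, f j, g m = 0 := by
  intro n
  induction n with
  | zero => simp
  | succ n ih =>
    intro m hm
    rw [Finset.sum_range_succ] at hm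
    rcases lt_or_ge m (∑ j ∈ Finset.range n, f j) with hlt | hge
    · exact ih m hlt
    · simpa [Nat.sub_add_cancel hge] using h n (m - ∑ j ∈ Finset.range n, f j) (by omega)

def compCocycle (Φ₁ : (ℕ → A) → (ℕ → B)) (s₁ : (ℕ → A) → ℕ) (s₂ : (ℕ → B) → ℕ)
    (x : ℕ → A) : ℕ :=
  ∑ i ∈ Finset.range (s₁ x), s₂ (shift^[i] (Φ₁ x))

section Comp

variable {X : Set (ℕ → A)} {Y : Set (ℕ → B)} {Φ₁ : (ℕ → A) → (ℕ → B)}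
  {Φ₂ : (ℕ → B) → (ℕ → C)} {s₁ : (ℕ → A) → ℕ} {s₂ : (ℕ → B) → ℕ}

lemma IsCocycle.comp (hY : Set.MapsTo shift Y Y) (hΦ₁ : Set.MapsTo Φ₁ X Y)
    (hs₁ : IsCocycle X Φ₁ s₁) (hs₂ : IsCocycle Y Φ₂ s₂) :
    IsCocycle X (Φ₂ ∘ Φ₁) (compCocycle Φ₁ s₁ s₂) := by
  intro x hx n
  rw [Function.comp_apply, hs₁.apply_shift hx, hs₂.apply_shift_iterate hY (hΦ₁ hx),
    shift_iterate_apply]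
  rfl

lemma continuousOn_compCocycle [TopologicalSpace A] [TopologicalSpace B]
    (hY : Set.MapsTo shift Y Y) (hΦ₁ : Set.MapsTo Φ₁ X Y) (hΦ₁c : ContinuousOn Φ₁ X)
    (hs₁ : ContinuousOn s₁ X) (hs₂ : ContinuousOn s₂ Y) :
    ContinuousOn (compCocycle Φ₁ s₁ s₂) X := by
  intro x hx
  have hterm : ∀ i, ContinuousOn (fun y => s₂ (shift^[i] (Φ₁ y))) X := fun i =>
    hs₂.comp ((continuous_shift.iterate i).comp_continuousOn hΦ₁c)
      fun y hy => hY.iterate i (hΦ₁ hy)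
  refine (continuousOn_finsetSum (Finset.range (s₁ x)) fun i _ => hterm i).continuousWithinAt
    hx |>.congr_of_eventuallyEq ?_ rfl
  filter_upwards [(hs₁ x hx).eventually_eq_of_discrete] with y hy
  rw [compCocycle, hy]

lemma exists_compCocycle_pos (hX : Set.MapsTo shift X X) (hΦ₁ : Set.MapsTo Φ₁ X Y)
    (hs₁ : IsCocycle X Φ₁ s₁) (hnt₁ : ∀ x ∈ X, ∃ n, 0 < s₁ (shift^[n] x))
    (hnt₂ : ∀ y ∈ Y, ∃ n, 0 < s₂ (shift^[n] y)) :
    ∀ x ∈ X, ∃ n, 0 < compCocycle Φ₁ s₁ s₂ (shift^[n] x) := by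
  intro x hx
  obtain ⟨m, hm⟩ := hnt₂ _ (hΦ₁ hx)
  by_contra! hS
  have hf : ∀ k, ∃ j, 0 < s₁ (shift^[j + k] x) := fun k => by
    simpa only [Function.iterate_add_apply] using hnt₁ _ (hX.iterate k hx)
  have hblock : ∀ n, ∀ i < s₁ (shift^[n] x),
      s₂ (shift^[i + ∑ j ∈ Finset.range n, s₁ (shift^[j] x)] (Φ₁ x)) = 0 := by
    intro n i hi
    have := Finset.sum_eq_zero_iff.1 (Nat.le_zero.1 (hS n)) i (Finset.mem_range.2 hi)
    rwa [hs₁.apply_shift_iterate hX hx, ← Function.iterate_add_apply] at this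
  obtain ⟨n, hn⟩ := exists_le_sum_range (f := fun j => s₁ (shift^[j] x)) hf (m + 1)
  exact hm.ne' (eq_zero_of_lt_sum_range (g := fun k => s₂ (shift^[k] (Φ₁ x))) hblock n m hn)

end Comp

/-- `prependWord w z` is the sequence `w z`, in the encoding used by `IsImplementation`. -/
def prependWord (w : List C) (z : ℕ → C) : ℕ → C :=
  fun n => if h : n < w.length then w.get ⟨n, h⟩ else z (n - w.length)

@[simp]
lemma prependWord_nil (z : ℕ → C) : prependWord [] z = z := rfl

lemma prependWord_append (u v : List C) (z : ℕ → C) :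
    prependWord (u ++ v) z = prependWord u (prependWord v z) := by
  funext n
  simp only [prependWord, List.length_append, List.get_eq_getElem, List.getElem_append]
  grind

lemma shift_iterate_prependWord (w : List C) (z : ℕ → C) :
    shift^[w.length] (prependWord w z) = z := by
  funext n
  simp [shift_iterate_apply, prependWord]

lemma iterWord_congr {φ : (ℕ → A) → List B} {a b : ℕ → A} {n : ℕ}
    (h : ∀ i < n, φ (shift^[i] a) = φ (shift^[i] b)) : iterWord φ a n = iterWord φ b n := by
  induction n with
  | zero => rfl
  | succ n ih =>
    rw [iterWord, iterWord, ih fun i hi => h i (Nat.lt_succ_of_lt hi), h n (Nat.lt_succ_self n)]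

section Implementation

variable {X : Set (ℕ → A)} {Φ : (ℕ → A) → (ℕ → B)} {φ : (ℕ → A) → List B}

lemma IsImplementation.apply_eq (hφ : IsImplementation X Φ φ) {x : ℕ → A} (hx : x ∈ X) :
    Φ x = prependWord (φ x) (Φ (shift x)) :=
  funext (hφ.2 x hx)

lemma IsImplementation.apply_eq_iterWord (hX : Set.MapsTo shift X X)
    (hφ : IsImplementation X Φ φ) {x : ℕ → A} (hx : x ∈ X) (k : ℕ) :
    Φ x = prependWord (iterWord φ x k) (Φ (shift^[k] x)) := by
  induction k with
  | zero => rfl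
  | succ k ih =>
    rw [ih, hφ.apply_eq (hX.iterate k hx), iterWord, prependWord_append,
      Function.iterate_succ_apply']

end Implementation

section CompImpl

variable {X : Set (ℕ → A)} {Y : Set (ℕ → B)} {Φ₁ : (ℕ → A) → (ℕ → B)}
  {Φ₂ : (ℕ → B) → (ℕ → C)} {φ₁ : (ℕ → A) → List B} {φ₂ : (ℕ → B) → List C}

lemma IsImplementation.comp_apply_eq (hY : Set.MapsTo shift Y Y) (hΦ₁ : Set.MapsTo Φ₁ X Y)
    (hφ₁ : IsImplementation X Φ₁ φ₁) (hφ₂ : IsImplementation Y Φ₂ φ₂) {x : ℕ → A} (hx : x ∈ X) :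
    Φ₂ (Φ₁ x) = prependWord (compImpl φ₁ Φ₁ φ₂ x) (Φ₂ (Φ₁ (shift x))) := by
  have hshift : shift^[(φ₁ x).length] (Φ₁ x) = Φ₁ (shift x) := by
    rw [hφ₁.apply_eq hx, shift_iterate_prependWord]
  rw [hφ₂.apply_eq_iterWord hY (hΦ₁ hx) (φ₁ x).length, hshift, compImpl]

lemma wordContinuousOn_compImpl [TopologicalSpace A] [DiscreteTopology A] [TopologicalSpace B]
    [DiscreteTopology B] (hY : Set.MapsTo shift Y Y) (hΦ₁ : Set.MapsTo Φ₁ X Y)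
    (hΦ₁c : ContinuousOn Φ₁ X) (hφ₁ : WordContinuousOn φ₁ X) (hφ₂ : WordContinuousOn φ₂ Y) :
    WordContinuousOn (compImpl φ₁ Φ₁ φ₂) X := by
  rw [wordContinuousOn_iff] at hφ₁ hφ₂ ⊢
  intro x hx
  have hwords : ∀ i, ∀ᶠ y in 𝓝[X] x, φ₂ (shift^[i] (Φ₁ y)) = φ₂ (shift^[i] (Φ₁ x)) := fun i =>
    ((continuous_shift.iterate i).comp_continuousOn hΦ₁c x hx).tendsto_nhdsWithin
      (fun y hy => hY.iterate i (hΦ₁ hy)) |>.eventually (hφ₂ _ (hY.iterate i (hΦ₁ hx)))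
  filter_upwards [hφ₁ x hx,
    (Filter.eventually_all_finset (Finset.range (φ₁ x).length)).2 fun i _ => hwords i]
    with y hy hyw
  rw [compImpl, compImpl, hy]
  exact iterWord_congr fun i hi => hyw i (Finset.mem_range.2 hi)

end CompImpl

end Dill

theorem stmt6_general {A B C : Type*}
    [TopologicalSpace A] [DiscreteTopology A] [TopologicalSpace B] [DiscreteTopology B]
    [TopologicalSpace C]
    (X : Set (ℕ → A)) (Y : Set (ℕ → B)) (Z : Set (ℕ → C))
    (hX : Subshift X) (hY : Subshift Y)
    (Φ₁ : (ℕ → A) → (ℕ → B)) (Φ₂ : (ℕ → B) → (ℕ → C))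
    (hΦ₁ : DillMap X Y Φ₁) (hΦ₂ : DillMap Y Z Φ₂)
    (φ₁ : (ℕ → A) → List B) (φ₂ : (ℕ → B) → List C)
    (hφ₁ : IsImplementation X Φ₁ φ₁) (hφ₂ : IsImplementation Y Φ₂ φ₂) :
    DillMap X Z (Φ₂ ∘ Φ₁) ∧ IsImplementation X (Φ₂ ∘ Φ₁) (compImpl φ₁ Φ₁ φ₂) := by
  obtain ⟨hm₁, hc₁, s₁, hs₁c, hs₁, hnt₁⟩ := hΦ₁
  obtain ⟨hm₂, hc₂, s₂, hs₂c, hs₂, hnt₂⟩ := hΦ₂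
  refine ⟨⟨hm₂.comp hm₁, hc₂.comp hc₁ hm₁, compCocycle Φ₁ s₁ s₂,
      continuousOn_compCocycle hY.2 hm₁ hc₁ hs₁c hs₂c, hs₁.comp hY.2 hm₁ hs₂,
      exists_compCocycle_pos hX.2 hm₁ hs₁ hnt₁ hnt₂⟩,
    wordContinuousOn_compImpl hY.2 hm₁ hc₁ hφ₁.1 hφ₂.1,
    fun x hx => congrFun (hφ₁.comp_apply_eq hY.2 hm₁ hφ₂ hx)⟩

/-- the composition of two dill maps is a dill map, with
implementation `φ(x) = ^{|φ₁(x)|}φ₂(^∞φ₁(x))`. -/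
theorem stmt6 {A B C : Type*} [Fintype A] [Fintype B] [Fintype C]
    [TopologicalSpace A] [DiscreteTopology A] [TopologicalSpace B] [DiscreteTopology B]
    [TopologicalSpace C] [DiscreteTopology C]
    (X : Set (ℕ → A)) (Y : Set (ℕ → B)) (Z : Set (ℕ → C))
    (hX : Subshift X) (hY : Subshift Y) (hZ : Subshift Z)
    (Φ₁ : (ℕ → A) → (ℕ → B)) (Φ₂ : (ℕ → B) → (ℕ → C))
    (hΦ₁ : DillMap X Y Φ₁) (hΦ₂ : DillMap Y Z Φ₂)
    (φ₁ : (ℕ → A) → List B) (φ₂ : (ℕ → B) → List C)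
    (hφ₁ : IsImplementation X Φ₁ φ₁) (hφ₂ : IsImplementation Y Φ₂ φ₂) :
    DillMap X Z (Φ₂ ∘ Φ₁) ∧ IsImplementation X (Φ₂ ∘ Φ₁) (compImpl φ₁ Φ₁ φ₂) :=
  stmt6_general X Y Z hX hY Φ₁ Φ₂ hΦ₁ hΦ₂ φ₁ φ₂ hφ₁ hφ₂
end
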